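/- Let G be a connected graph on n vertices, x a vertex of G with exactly three neighbors, y and z two distinct neighbors of x, and c ≥ 0 an integer; let G' be the associated terminal-augmented graph with terminals s and t, and let G_+ be obtained from G' by additionally adding, for each vertex v of G, two new vertices adjacent only to (the copy of) v. Then G has a Hamiltonian cycle if and only if G_+ contains an st-path P with |V(P)| ≤ n + 2 and |N_{G_+}(V(P))| ≥ 2n + c. -/

import Mathlib

open SimpleGraph

/-- The open neighborhood of a vertex set `S`: vertices outside `S` adjacent to some
vertex of `S`. -/
def openNbhd {V : Type*} (G : SimpleGraph V) (S : Set V) : Set V :=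
  {v | v ∉ S ∧ ∃ w ∈ S, G.Adj v w}

/-- The terminal-augmented graph `G'` of `(G, x, y, z, c)`: a new vertex `s`
(modelled as `Sum.inr (Sum.inl ())`) adjacent exactly to `x`, a new vertex `t`
(modelled as `Sum.inr (Sum.inr (Sum.inl ()))`) adjacent exactly to `y` and `z`,
and `c` new vertices (the set `Z`, modelled as `Sum.inr (Sum.inr (Sum.inr i))`)
each adjacent exactly to `s`. -/
def termAug {V : Type*} (G : SimpleGraph V) (x y z : V) (c : ℕ) :
    SimpleGraph (V ⊕ (Unit ⊕ Unit ⊕ Fin c)) :=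
  SimpleGraph.fromRel (fun a b =>
    match a, b with
    | Sum.inl v, Sum.inl w => G.Adj v w
    | Sum.inl v, Sum.inr (Sum.inl _) => v = x
    | Sum.inl v, Sum.inr (Sum.inr (Sum.inl _)) => v = y ∨ v = z
    | Sum.inr (Sum.inl _), Sum.inr (Sum.inr (Sum.inr _)) => True
    | _, _ => False)

/-- The terminal `s` of the terminal-augmented graph. -/
def sVert (V : Type*) (c : ℕ) : V ⊕ (Unit ⊕ Unit ⊕ Fin c) := Sum.inr (Sum.inl ())

/-- The terminal `t` of the terminal-augmented graph. -/
def tVert (V : Type*) (c : ℕ) : V ⊕ (Unit ⊕ Unit ⊕ Fin c) := Sum.inr (Sum.inr (Sum.inl ()))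

/-- `G` has a Hamiltonian cycle. -/
def HasHamiltonianCycle {V : Type*} [DecidableEq V] (G : SimpleGraph V) : Prop :=
  ∃ (v : V) (p : G.Walk v v), p.IsHamiltonianCycle

/-- The graph `G_+`, obtained from the terminal-augmented graph `G'` by adding,
for each vertex `v` of `G`, two new vertices (modelled as `(v, false)` and
`(v, true)`) adjacent only to (the copy of) `v`. -/
def termAugPlus {V : Type*} (G : SimpleGraph V) (x y z : V) (c : ℕ) :
    SimpleGraph ((V ⊕ (Unit ⊕ Unit ⊕ Fin c)) ⊕ (V × Bool)) :=
  SimpleGraph.fromRel (fun a b =>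
    match a, b with
    | Sum.inl u, Sum.inl w => (termAug G x y z c).Adj u w
    | Sum.inl (Sum.inl v), Sum.inr (w, _) => v = w
    | _, _ => False)

/-!
Since `x` has degree three, the two cycle-neighbours of `x` on a Hamiltonian cycle cannot both
avoid `{y, z}`, so `G` is Hamiltonian iff it has a Hamiltonian path from `y` or `z` to `x`. Such a
path `P` gives the `st`-path `s, x, P⁻¹, t` of `G_+`, whose neighbourhood is exactly the `2n`
pendant vertices together with `Z`. Conversely, an `st`-path meeting `k` vertices of `G` has at
most `(n - k) + 2k + c` neighbours, so the neighbourhood bound forces it through all of `V(G)`,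
and the length bound then leaves room only for `s` and `t`: between them lies a Hamiltonian path
of `G` from `x` to a neighbour of `t`.
-/

lemma Set.not_disjoint_pair_of_ncard_eq_three {α : Type*} {s : Set α} (hs : s.ncard = 3)
    {a b y z : α} (ha : a ∈ s) (hb : b ∈ s) (hy : y ∈ s) (hz : z ∈ s) (hab : a ≠ b)
    (hyz : y ≠ z) : ¬ Disjoint ({a, b} : Set α) {y, z} := by
  intro hdisj
  have := Set.ncard_le_ncard (Set.union_subset (Set.pair_subset ha hb) (Set.pair_subset hy hz))
    (Set.finite_of_ncard_pos (by omega))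
  rw [Set.ncard_union_eq hdisj, Set.ncard_pair hab, Set.ncard_pair hyz] at this
  omega

namespace SimpleGraph.Walk

variable {V : Type*} {G : SimpleGraph V}

theorem exists_support_map_eq_of_forall_mem_range {W : Type*} {H : SimpleGraph W} (f : G ↪g H)
    {u v : W} (r : H.Walk u v) (hr : ∀ w ∈ r.support, w ∈ Set.range f) {a b : V}
    (ha : f a = u) (hb : f b = v) :
    ∃ p : G.Walk a b, p.support.map f = r.support := by
  induction r generalizing a with
  | nil =>
    subst ha
    obtain rfl := f.injective hb
    exact ⟨.nil, rfl⟩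
  | cons h r ih =>
    subst ha
    obtain ⟨a', rfl⟩ := hr _ (List.mem_cons_of_mem _ r.start_mem_support)
    obtain ⟨p, hp⟩ := ih (fun w hw => hr w (List.mem_cons_of_mem _ hw)) rfl hb
    exact ⟨.cons (f.map_adj_iff.1 h) p, by simp [hp]⟩

variable [DecidableEq V]

lemma IsHamiltonianCycle.reverse {x : V} {p : G.Walk x x} (hp : p.IsHamiltonianCycle) :
    p.reverse.IsHamiltonianCycle := by
  have := hp.finite
  cases nonempty_fintype V
  rw [isHamiltonianCycle_iff_isCycle_and_length_eq] at hp ⊢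
  exact ⟨hp.1.reverse, by rw [length_reverse, hp.2]⟩

lemma IsHamiltonianCycle.exists_ne_adj_and_isHamiltonian {x : V} {p : G.Walk x x}
    (hp : p.IsHamiltonianCycle) :
    ∃ a b, a ≠ b ∧ G.Adj x a ∧ G.Adj x b ∧
      (∃ w : G.Walk a x, w.IsHamiltonian) ∧ ∃ w : G.Walk b x, w.IsHamiltonian :=
  ⟨p.snd, p.reverse.snd, snd_reverse p ▸ hp.isCycle.snd_ne_penultimate,
    adj_snd hp.isCycle.not_nil, adj_snd hp.reverse.isCycle.not_nil,
    ⟨p.tail, hp.isHamiltonian_tail⟩, ⟨p.reverse.tail, hp.reverse.isHamiltonian_tail⟩⟩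

lemma IsHamiltonian.isHamiltonianCycle_cons [Fintype V] {b x : V} {w : G.Walk b x}
    (hw : w.IsHamiltonian) (h : G.Adj x b) (hV : 3 ≤ Fintype.card V) :
    (cons h w).IsHamiltonianCycle := by
  rw [isHamiltonianCycle_iff_isCycle_and_length_eq, cons_isCycle_iff, length_cons,
    hw.length_eq]
  refine ⟨⟨hw.isPath, fun he => ?_⟩, by omega⟩
  have := hw.isPath.length_eq_one_of_mem_edges (Sym2.eq_swap ▸ he)
  rw [hw.length_eq] at this
  omega

end SimpleGraph.Walk

theorem hasHamiltonianCycle_iff_exists_isHamiltonian {V : Type*} [Fintype V] [DecidableEq V]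
    {G : SimpleGraph V} {x y z : V} (hx : (G.neighborSet x).ncard = 3) (hy : G.Adj x y)
    (hz : G.Adj x z) (hyz : y ≠ z) :
    HasHamiltonianCycle G ↔ ∃ b ∈ ({y, z} : Set V), ∃ w : G.Walk b x, w.IsHamiltonian := by
  constructor
  · rintro ⟨v, p, hp⟩
    obtain ⟨a, b, hab, ha, hb, hwa, hwb⟩ :=
      (hp.rotate (hp.mem_support x)).exists_ne_adj_and_isHamiltonian
    obtain ⟨u, hu_ab, hu_yz⟩ := Set.not_disjoint_iff.1
      (Set.not_disjoint_pair_of_ncard_eq_three hx ha hb hy hz hab hyz)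
    rcases hu_ab with rfl | rfl
    exacts [⟨u, hu_yz, hwa⟩, ⟨u, hu_yz, hwb⟩]
  · rintro ⟨b, hb, w, hw⟩
    have hxb : G.Adj x b := by rcases hb with rfl | rfl <;> assumption
    have hV : 3 ≤ Fintype.card V :=
      hx ▸ Nat.card_eq_fintype_card (α := V) ▸ Set.ncard_le_card _
    exact ⟨x, _, hw.isHamiltonianCycle_cons hxb hV⟩

def zVert (V : Type*) (c : ℕ) (i : Fin c) : V ⊕ (Unit ⊕ Unit ⊕ Fin c) :=
  Sum.inr (Sum.inr (Sum.inr i))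

namespace termAugPlus

variable {V : Type*} {G : SimpleGraph V} {x y z : V} {c : ℕ}

@[simp]
lemma adj_inl_inl {v w : V} :
    (termAugPlus G x y z c).Adj (Sum.inl (Sum.inl v)) (Sum.inl (Sum.inl w)) ↔ G.Adj v w := by
  simp only [termAugPlus, termAug, fromRel_adj]
  grind [G.ne_of_adj, G.adj_symm]

variable (G x y z c) in
@[simps]
def embedding : G ↪g termAugPlus G x y z c where
  toFun v := Sum.inl (Sum.inl v)
  inj' _ _ h := by simpa using h
  map_rel_iff' := adj_inl_inl

lemma adj_sVert_iff {u} : (termAugPlus G x y z c).Adj (Sum.inl (sVert V c)) u ↔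
    u = Sum.inl (Sum.inl x) ∨ ∃ i, u = Sum.inl (zVert V c i) := by
  rcases u with (v | (⟨⟩ | ⟨⟩ | i)) | ⟨v, b⟩ <;>
    simp [termAugPlus, termAug, sVert, zVert, eq_comm]

lemma adj_tVert_iff {u} : (termAugPlus G x y z c).Adj u (Sum.inl (tVert V c)) ↔
    u = Sum.inl (Sum.inl y) ∨ u = Sum.inl (Sum.inl z) := by
  rcases u with (v | (⟨⟩ | ⟨⟩ | i)) | ⟨v, b⟩ <;>
    simp [termAugPlus, termAug, tVert]

lemma adj_inr_iff {v : V} {b : Bool} {u} :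
    (termAugPlus G x y z c).Adj (Sum.inr (v, b)) u ↔ u = Sum.inl (Sum.inl v) := by
  rcases u with (w | (⟨⟩ | ⟨⟩ | i)) | ⟨w, b'⟩ <;>
    simp [termAugPlus, termAug, eq_comm]

variable [Fintype V]

lemma forall_mem_of_le_ncard_openNbhd {S : Set ((V ⊕ (Unit ⊕ Unit ⊕ Fin c)) ⊕ (V × Bool))}
    (hs : Sum.inl (sVert V c) ∈ S) (ht : Sum.inl (tVert V c) ∈ S)
    (h : 2 * Fintype.card V + c ≤ (openNbhd (termAugPlus G x y z c) S).ncard) :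
    ∀ v, Sum.inl (Sum.inl v) ∈ S := by
  set K : Set V := {v | Sum.inl (Sum.inl v) ∈ S}
  have hsub : openNbhd (termAugPlus G x y z c) S ⊆
      (fun v => Sum.inl (Sum.inl v)) '' Kᶜ ∪ Sum.inr '' (K ×ˢ Set.univ) ∪
        Set.range (fun i => Sum.inl (zVert V c i)) := by
    rintro u ⟨huS, w, hwS, hadj⟩
    rcases u with ((v | (⟨⟩ | ⟨⟩ | i)) | ⟨v, b⟩)
    · exact Or.inl (Or.inl ⟨v, huS, rfl⟩)
    · exact absurd hs huS
    · exact absurd ht huS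
    · exact Or.inr ⟨i, rfl⟩
    · obtain rfl := adj_inr_iff.1 hadj
      exact Or.inl (Or.inr ⟨(v, b), ⟨hwS, trivial⟩, rfl⟩)
  have hinl : Function.Injective (fun v : V => (Sum.inl (Sum.inl v) :
      (V ⊕ (Unit ⊕ Unit ⊕ Fin c)) ⊕ (V × Bool))) := fun _ _ h => by simpa using h
  have hbound : (openNbhd (termAugPlus G x y z c) S).ncard ≤ Kᶜ.ncard + K.ncard * 2 + c :=
    calc _ ≤ _ := Set.ncard_le_ncard hsub
      _ ≤ _ := (Set.ncard_union_le _ _).trans (add_le_add_left (Set.ncard_union_le _ _) _)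
      _ = Kᶜ.ncard + K.ncard * 2 + c := by
        rw [Set.ncard_image_of_injective _ hinl, Set.ncard_image_of_injective _ Sum.inr_injective,
          Set.ncard_range_of_injective (fun _ _ h => by simpa [zVert] using h), Set.ncard_prod,
          Set.ncard_univ]
        simp
  have hK := Set.ncard_add_ncard_compl K
  rw [Nat.card_eq_fintype_card] at hK
  have hKc : Kᶜ = ∅ := (Set.ncard_eq_zero).1 (by omega)
  intro v
  by_contra hv
  exact hKc.subset hv

variable [DecidableEq V]

variable (V c) in
def coreVerts : Finset ((V ⊕ (Unit ⊕ Unit ⊕ Fin c)) ⊕ (V × Bool)) :=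
  {Sum.inl (sVert V c), Sum.inl (tVert V c)} ∪
    Finset.univ.map (Function.Embedding.inl.trans Function.Embedding.inl)

lemma mem_coreVerts {a} : a ∈ coreVerts V c ↔
    a = Sum.inl (sVert V c) ∨ a = Sum.inl (tVert V c) ∨ ∃ v, a = Sum.inl (Sum.inl v) := by
  simp [coreVerts, eq_comm]

lemma card_coreVerts : (coreVerts V c).card = Fintype.card V + 2 := by
  rw [coreVerts, Finset.card_union_of_disjoint (by simp [sVert, tVert]), Finset.card_pair
    (by simp [sVert, tVert]), Finset.card_map, Finset.card_univ, add_comm]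

lemma le_ncard_openNbhd {S : Set ((V ⊕ (Unit ⊕ Unit ⊕ Fin c)) ⊕ (V × Bool))}
    (hs : Sum.inl (sVert V c) ∈ S) (hV : ∀ v, Sum.inl (Sum.inl v) ∈ S)
    (hS : ∀ a ∈ S, a ∈ coreVerts V c) :
    2 * Fintype.card V + c ≤ (openNbhd (termAugPlus G x y z c) S).ncard := by
  have hsub : Set.range Sum.inr ∪ Set.range (fun i => Sum.inl (zVert V c i)) ⊆
      openNbhd (termAugPlus G x y z c) S := by
    rintro u (⟨⟨v, b⟩, rfl⟩ | ⟨i, rfl⟩)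
    · exact ⟨fun h => by simpa [mem_coreVerts, sVert, tVert] using hS _ h, _, hV v,
        adj_inr_iff.2 rfl⟩
    · exact ⟨fun h => by simpa [mem_coreVerts, sVert, tVert, zVert] using hS _ h, _, hs,
        (adj_sVert_iff.2 (Or.inr ⟨i, rfl⟩)).symm⟩
  calc 2 * Fintype.card V + c
      = (Set.range Sum.inr ∪ Set.range (fun i => Sum.inl (zVert V c i))).ncard := by
        rw [Set.ncard_union_eq (by simp [Set.disjoint_left]),
          Set.ncard_range_of_injective Sum.inr_injective,
          Set.ncard_range_of_injective (fun _ _ h => by simpa [zVert] using h)]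
        simp [mul_comm]
    _ ≤ _ := Set.ncard_le_ncard hsub

lemma forall_mem_coreVerts_of_length_support_le
    {p : (termAugPlus G x y z c).Walk (Sum.inl (sVert V c)) (Sum.inl (tVert V c))}
    (hlen : p.support.length ≤ Fintype.card V + 2)
    (hV : ∀ v, Sum.inl (Sum.inl v) ∈ p.support) :
    ∀ a ∈ p.support, a ∈ coreVerts V c := by
  have hsub : coreVerts V c ⊆ p.support.toFinset := fun a ha => by
    rcases mem_coreVerts.1 ha with rfl | rfl | ⟨v, rfl⟩ <;> simp [hV]
  have heq := Finset.eq_of_subset_of_card_le hsub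
    (p.support.toFinset_card_le.trans (hlen.trans card_coreVerts.ge))
  intro a ha
  rwa [heq, List.mem_toFinset]

lemma exists_isHamiltonian_of_isPath
    {p : (termAugPlus G x y z c).Walk (Sum.inl (sVert V c)) (Sum.inl (tVert V c))}
    (hp : p.IsPath) (hcore : ∀ a ∈ p.support, a ∈ coreVerts V c)
    (hV : ∀ v, Sum.inl (Sum.inl v) ∈ p.support) :
    ∃ b ∈ ({y, z} : Set V), ∃ w : G.Walk b x, w.IsHamiltonian := by
  obtain ⟨u, h₁, q, rfl⟩ := Walk.exists_eq_cons_of_ne (by simp [sVert, tVert]) p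
  obtain ⟨hq, hsq⟩ := (Walk.cons_isPath_iff _ _).1 hp
  obtain rfl : u = Sum.inl (Sum.inl x) := by
    rcases adj_sVert_iff.1 h₁ with hu | ⟨i, rfl⟩
    · exact hu
    · simpa [mem_coreVerts, sVert, tVert, zVert] using
        hcore _ (List.mem_cons_of_mem _ q.start_mem_support)
  obtain ⟨u, h₂, r, hr⟩ := Walk.exists_eq_cons_of_ne (by simp [tVert]) q.reverse
  obtain ⟨hr_path, htr⟩ := (Walk.cons_isPath_iff _ _).1 (hr ▸ hq.reverse)
  have hq_supp (a) : a ∈ q.support ↔ a = Sum.inl (tVert V c) ∨ a ∈ r.support := by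
    rw [← List.mem_reverse, ← Walk.support_reverse, hr, Walk.support_cons, List.mem_cons]
  obtain ⟨b, hb, rfl⟩ : ∃ b ∈ ({y, z} : Set V), embedding G x y z c b = u := by
    rcases adj_tVert_iff.1 h₂.symm with rfl | rfl
    exacts [⟨y, by simp, rfl⟩, ⟨z, by simp, rfl⟩]
  have hr_range : ∀ a ∈ r.support, a ∈ Set.range (embedding G x y z c) := fun a ha => by
    rcases mem_coreVerts.1 (hcore a (by simp [hq_supp, ha])) with rfl | rfl | ⟨v, rfl⟩
    · exact absurd ((hq_supp _).2 (Or.inr ha)) hsq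
    · exact absurd ha htr
    · exact ⟨v, rfl⟩
  obtain ⟨w, hw⟩ := Walk.exists_support_map_eq_of_forall_mem_range _ r hr_range rfl rfl
  refine ⟨b, hb, w, Walk.IsPath.isHamiltonian_of_mem ?_ fun v => ?_⟩
  · exact Walk.IsPath.mk' ((hw ▸ hr_path.support_nodup).of_map _)
  · have hv := hV v
    simp only [Walk.support_cons, List.mem_cons, hq_supp, ← hw, List.mem_map] at hv
    simpa [sVert, tVert] using hv

lemma exists_isPath_of_isHamiltonian {b : V} (hb : b ∈ ({y, z} : Set V)) {w : G.Walk b x}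
    (hw : w.IsHamiltonian) :
    ∃ p : (termAugPlus G x y z c).Walk (Sum.inl (sVert V c)) (Sum.inl (tVert V c)),
      p.IsPath ∧ p.support.length = Fintype.card V + 2 ∧
        ∀ a, a ∈ p.support ↔ a ∈ coreVerts V c := by
  set f := (embedding G x y z c).toHom
  have hs : (termAugPlus G x y z c).Adj (Sum.inl (sVert V c)) (f x) :=
    adj_sVert_iff.2 (Or.inl rfl)
  have ht : (termAugPlus G x y z c).Adj (f b) (Sum.inl (tVert V c)) :=
    adj_tVert_iff.2 (by rcases hb with rfl | rfl <;> simp [f])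
  let p := Walk.cons hs ((w.map f).reverse.concat ht)
  have hsupp : p.support =
      Sum.inl (sVert V c) :: ((w.support.map f).reverse ++ [Sum.inl (tVert V c)]) := by
    simp [p, Walk.support_concat]
  refine ⟨p, ?_, ?_, fun a => ?_⟩
  · rw [Walk.isPath_def, hsupp]
    simp [sVert, tVert, f, List.nodup_append,
      hw.isPath.support_nodup.map (embedding G x y z c).injective]
  · simp [hsupp, hw.length_support]
  · simp only [hsupp, mem_coreVerts, List.mem_cons, List.mem_append, List.mem_reverse,
      List.mem_map, hw.mem_support, true_and]
    aesop

theorem exists_isHamiltonian_iff_exists_isPath :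
    (∃ b ∈ ({y, z} : Set V), ∃ w : G.Walk b x, w.IsHamiltonian) ↔
      ∃ p : (termAugPlus G x y z c).Walk (Sum.inl (sVert V c)) (Sum.inl (tVert V c)),
        p.IsPath ∧ p.support.length ≤ Fintype.card V + 2 ∧
        2 * Fintype.card V + c ≤
          (openNbhd (termAugPlus G x y z c) {a | a ∈ p.support}).ncard := by
  constructor
  · rintro ⟨b, hb, w, hw⟩
    obtain ⟨p, hp, hlen, hcore⟩ := exists_isPath_of_isHamiltonian (c := c) hb hw
    refine ⟨p, hp, hlen.le, le_ncard_openNbhd p.start_mem_support (fun v => ?_)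
      fun a => (hcore a).1⟩
    exact (hcore _).2 (mem_coreVerts.2 (Or.inr (Or.inr ⟨v, rfl⟩)))
  · rintro ⟨p, hp, hlen, hnbhd⟩
    have hV := forall_mem_of_le_ncard_openNbhd p.start_mem_support p.end_mem_support hnbhd
    exact exists_isHamiltonian_of_isPath hp (forall_mem_coreVerts_of_length_support_le hlen hV) hV

end termAugPlus

theorem stmt_8_general {V : Type*} [Fintype V] [DecidableEq V] (G : SimpleGraph V)
    (x y z : V) (hx : (G.neighborSet x).ncard = 3)
    (hy : G.Adj x y) (hz : G.Adj x z) (hyz : y ≠ z) (c : ℕ) :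
    HasHamiltonianCycle G ↔
      ∃ p : (termAugPlus G x y z c).Walk (Sum.inl (sVert V c)) (Sum.inl (tVert V c)),
        p.IsPath ∧ p.support.length ≤ Fintype.card V + 2 ∧
        2 * Fintype.card V + c ≤
          (openNbhd (termAugPlus G x y z c) {a | a ∈ p.support}).ncard :=
  (hasHamiltonianCycle_iff_exists_isHamiltonian hx hy hz hyz).trans
    termAugPlus.exists_isHamiltonian_iff_exists_isPath

/-- `G` has a Hamiltonian cycle iff `G_+` contains an `st`-path `P` with
`|V(P)| ≤ n + 2` and `|N_{G_+}(V(P))| ≥ 2n + c`. -/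
theorem stmt_8 {V : Type*} [Fintype V] [DecidableEq V] (G : SimpleGraph V)
    (hG : G.Connected) (x y z : V) (hx : (G.neighborSet x).ncard = 3)
    (hy : G.Adj x y) (hz : G.Adj x z) (hyz : y ≠ z) (c : ℕ) :
    HasHamiltonianCycle G ↔
      ∃ p : (termAugPlus G x y z c).Walk (Sum.inl (sVert V c)) (Sum.inl (tVert V c)),
        p.IsPath ∧ p.support.length ≤ Fintype.card V + 2 ∧
        2 * Fintype.card V + c ≤
          (openNbhd (termAugPlus G x y z c) {a | a ∈ p.support}).ncard :=
  stmt_8_general G x y z hx hy hz hyz c
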